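/- arXiv:1709.05719 — 2 statements merged into one kernel-verified Lean document; each statement's English description precedes it below -/
import Mathlib

section
/- Let s > d/2, s' = s - (d-m)/2, and q ∈ Emb(M,ℝ^d). Let Ex_q : H^{s'}(M,ℝ^d) → H^s(ℝ^d,ℝ^d) be any bounded linear extension operator with Tr_q∘Ex_q = Id_{H^{s'}(M,ℝ^d)}. Then the following operator identities hold: A_q = Ex_q* P_q* A P_q Ex_q, B_q = Tr_q A⁻¹ Tr_q*, and P_q = A⁻¹ Tr_q* A_q Tr_q. -/
/-!
Since `P` is `⟨·,·⟩_A`-orthogonal with kernel `ker Tr`, the fiber `{X : Tr X = u}` is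
`P X + ker Tr` and `⟨X, X⟩_A = ⟨P X, P X⟩_A + ⟨X - P X, X - P X⟩_A` on it, so the infimum
defining the outer metric is attained at `P X`. Polarizing,
`A_q (Tr X) (Tr Y) = ⟨P X, P Y⟩_A = ⟨P X, Y⟩_A`, and each of the three identities is a
rewriting of this formula using `Tr ∘ Ex = id` and `B_q ∘ A_q = id`.
-/

open MeasureTheory Function
open scoped FourierTransform Manifold

noncomputable section

abbrev Euc (d : ℕ) := EuclideanSpace ℝ (Fin d)

def cplx {d k : ℕ} (f : Euc d → Euc k) : Euc d → EuclideanSpace ℂ (Fin k) :=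
  fun x => WithLp.toLp 2 (fun i => (f x i : ℂ))

def HsNorm {d k : ℕ} (s : ℝ) (f : Euc d → Euc k) : ℝ :=
  Real.sqrt (∫ ξ : Euc d, (1 + ‖ξ‖ ^ 2) ^ s * ‖𝓕 (cplx f) ξ‖ ^ 2)

def IsSmoothEmb {d : ℕ} (m : ℕ) {M : Type*} [TopologicalSpace M]
    [ChartedSpace (EuclideanSpace ℝ (Fin m)) M] (q : M → Euc d) : Prop :=
  ContMDiff (𝓡 m) 𝓘(ℝ, Euc d) (⊤ : ℕ∞) q ∧ Topology.IsEmbedding q ∧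
    ∀ x, Function.Injective (mfderiv (𝓡 m) 𝓘(ℝ, Euc d) q x)

section OuterEnergy

variable {E F : Type*} [NormedAddCommGroup E] [NormedSpace ℝ E]
  [NormedAddCommGroup F] [NormedSpace ℝ F]

/-- The outer metric `G^𝒪(u, u)` induced by the form `a` through `T`. -/
def outerEnergy (a : E →L[ℝ] E →L[ℝ] ℝ) (T : E →L[ℝ] F) (u : F) : ℝ :=
  sInf {r | ∃ X : E, T X = u ∧ r = a X X}

variable {a : E →L[ℝ] E →L[ℝ] ℝ} {P : E →L[ℝ] E} {T : E →L[ℝ] F}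

theorem apply_eq_apply_of_ker_iff (hker : ∀ X, P X = 0 ↔ T X = 0) {X Y : E}
    (h : T X = T Y) : P X = P Y := by
  rw [← sub_eq_zero, ← map_sub, hker, map_sub, h, sub_self]

theorem apply_apply_eq_of_idem_of_ker_iff (hPP : ∀ X, P (P X) = P X)
    (hker : ∀ X, P X = 0 ↔ T X = 0) (X : E) : T (P X) = T X := by
  rw [← sub_eq_zero, ← map_sub, ← hker, map_sub, hPP, sub_self]

theorem form_self_eq_add_of_orth (hsymm : ∀ X Y, a X Y = a Y X)
    (horth : ∀ X Y, a (P X) (P Y) = a (P X) Y) (X : E) :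
    a X X = a (P X) (P X) + a (X - P X) (X - P X) := by
  have hPX := horth X X
  have hXPX := hsymm X (P X)
  simp only [map_sub, sub_apply]
  linarith

theorem form_add_self_sub_form_sub_self (hsymm : ∀ X Y, a X Y = a Y X) (X Y : E) :
    (a (X + Y) (X + Y) - a (X - Y) (X - Y)) / 4 = a X Y := by
  simp only [map_add, map_sub, add_apply, sub_apply, hsymm Y X]
  ring

theorem outerEnergy_eq (hpos : ∀ X, 0 ≤ a X X) (hsymm : ∀ X Y, a X Y = a Y X)
    (horth : ∀ X Y, a (P X) (P Y) = a (P X) Y) (hPP : ∀ X, P (P X) = P X)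
    (hker : ∀ X, P X = 0 ↔ T X = 0) (X : E) :
    outerEnergy a T (T X) = a (P X) (P X) := by
  apply le_antisymm
  · refine csInf_le ⟨0, ?_⟩ ⟨P X, apply_apply_eq_of_idem_of_ker_iff hPP hker X, rfl⟩
    rintro _ ⟨Y, -, rfl⟩
    exact hpos Y
  · refine le_csInf ⟨_, X, rfl, rfl⟩ ?_
    rintro _ ⟨Y, hY, rfl⟩
    have hPY : P Y = P X := apply_eq_apply_of_ker_iff hker hY
    have hcompl := hpos (Y - P Y)
    rw [form_self_eq_add_of_orth hsymm horth Y]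
    rw [hPY] at hcompl ⊢
    linarith

theorem polar_outerEnergy_eq (hpos : ∀ X, 0 ≤ a X X) (hsymm : ∀ X Y, a X Y = a Y X)
    (horth : ∀ X Y, a (P X) (P Y) = a (P X) Y) (hPP : ∀ X, P (P X) = P X)
    (hker : ∀ X, P X = 0 ↔ T X = 0) (X Y : E) :
    (outerEnergy a T (T X + T Y) - outerEnergy a T (T X - T Y)) / 4 = a (P X) (P Y) := by
  rw [← map_add, ← map_sub, outerEnergy_eq hpos hsymm horth hPP hker,
    outerEnergy_eq hpos hsymm horth hPP hker, map_add, map_sub]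
  exact form_add_self_sub_form_sub_self hsymm _ _

end OuterEnergy

theorem riesz_projection_trace_identities_general
    -- H^s(ℝ^d,ℝ^d), realized as vector fields, with norm the H^s-norm
    (Hs : Type*) [NormedAddCommGroup Hs] [NormedSpace ℝ Hs]
    -- H^{s'}(M,ℝ^d), realized as maps M → ℝ^d
    (Hs' : Type*) [NormedAddCommGroup Hs'] [NormedSpace ℝ Hs']
    -- the trace operator Tr_q : H^s(ℝ^d,ℝ^d) → H^{s'}(M,ℝ^d), X ↦ X ∘ q
    (Tr : Hs →L[ℝ] Hs')
    -- a bounded linear extension operator, right inverse of the trace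
    (Ex : Hs' →L[ℝ] Hs) (hEx : ∀ u, Tr (Ex u) = u)
    -- the Riesz isomorphism A of the inner product ⟨·,·⟩_A on H^s, with A X Y = ⟨X,Y⟩_A,
    -- symmetric, positive, and with ⟨X,X⟩_A equivalent to ‖X‖²_{H^s}
    (A : Hs ≃L[ℝ] StrongDual ℝ Hs)
    (hAsymm : ∀ X Y, A X Y = A Y X)
    (CA : ℝ) (hCA : 0 < CA)
    (hAeq : ∀ X, CA⁻¹ * ‖X‖ ^ 2 ≤ A X X ∧ A X X ≤ CA * ‖X‖ ^ 2)
    -- the ‖·‖_A-orthogonal projection P_q with kernel ker Tr_q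
    (P : Hs →L[ℝ] Hs)
    (hPP : ∀ X, P (P X) = P X)
    (hPker : ∀ X, P X = 0 ↔ Tr X = 0)
    (hPorth : ∀ X Y, A (P X) (P Y) = A (P X) Y)
    -- the Riesz isomorphism A_q of the outer metric G^𝒪_q on H^{s'}(M,ℝ^d),
    -- where G^𝒪_q is the polarization of u ↦ inf { ⟨X,X⟩_A : Tr_q X = u }
    (Aq : Hs' →L[ℝ] StrongDual ℝ Hs')
    (hAq : ∀ u v : Hs', Aq u v =
      (sInf {r | ∃ X : Hs, Tr X = u + v ∧ r = A X X} -
        sInf {r | ∃ X : Hs, Tr X = u - v ∧ r = A X X}) / 4)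
    -- B_q = A_q⁻¹
    (Bq : StrongDual ℝ Hs' →L[ℝ] Hs')
    (hBqAq : ∀ u, Bq (Aq u) = u) :
    (∀ u : Hs', Aq u = (A (P (Ex u))).comp (P.comp Ex)) ∧
    (∀ α : StrongDual ℝ Hs', Bq α = Tr (A.symm (α.comp Tr))) ∧
    (∀ X : Hs, P X = A.symm ((Aq (Tr X)).comp Tr)) := by
  have hpos : ∀ X, 0 ≤ A X X := fun X => (by positivity : 0 ≤ CA⁻¹ * ‖X‖ ^ 2).trans (hAeq X).1
  have hAqTr : ∀ X Y, Aq (Tr X) (Tr Y) = A (P X) (P Y) := fun X Y =>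
    (hAq _ _).trans <| polar_outerEnergy_eq (a := (A : Hs →L[ℝ] StrongDual ℝ Hs))
      hpos hAsymm hPorth hPP hPker X Y
  have hTrP := apply_apply_eq_of_idem_of_ker_iff hPP hPker
  refine ⟨fun u => ?_, fun α => ?_, fun X => ?_⟩
  · ext v
    simpa only [ContinuousLinearMap.comp_apply, hEx] using hAqTr (Ex u) (Ex v)
  · set Y := A.symm (α.comp Tr)
    have hAqY : Aq (Tr Y) = α := by
      ext v
      rw [← hEx v, hAqTr, hAsymm, hPorth, hAsymm, A.apply_symm_apply,
        ContinuousLinearMap.comp_apply, hTrP]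
    simpa only [hAqY] using hBqAq (Tr Y)
  · rw [eq_comm, ContinuousLinearEquiv.symm_apply_eq]
    ext Y
    rw [ContinuousLinearMap.comp_apply, hAqTr, hPorth]

/-- With `A` the Riesz isomorphism of `⟨·,·⟩_A` on `H^s(ℝ^d,ℝ^d)`,
`Tr_q` the trace, `Ex_q` any bounded right inverse of `Tr_q`, `P_q` the
`‖·‖_A`-orthogonal projection with kernel `ker Tr_q`, `A_q` the Riesz isomorphism of the
outer metric `G^𝒪_q` on `H^{s'}(M,ℝ^d)` and `B_q = A_q⁻¹`, the identities
`A_q = Ex_q* P_q* A P_q Ex_q`, `B_q = Tr_q A⁻¹ Tr_q*`, `P_q = A⁻¹ Tr_q* A_q Tr_q` hold. -/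
theorem riesz_projection_trace_identities
    (d m : ℕ) (s s' : ℝ) (hs : (d : ℝ) / 2 < s) (hs' : s' = s - ((d : ℝ) - m) / 2)
    (M : Type*) [TopologicalSpace M] [ChartedSpace (EuclideanSpace ℝ (Fin m)) M]
    [IsManifold (𝓡 m) ((⊤ : ℕ∞) : WithTop ℕ∞) M] [CompactSpace M]
    (q : M → Euc d) (hq : IsSmoothEmb m q)
    -- H^s(ℝ^d,ℝ^d), realized as vector fields, with norm the H^s-norm
    (Hs : Type*) [NormedAddCommGroup Hs] [NormedSpace ℝ Hs]
    (ιd : Hs →ₗ[ℝ] (Euc d → Euc d)) (hιd : Function.Injective ιd)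
    (hHs : ∀ X, ‖X‖ = HsNorm s (ιd X))
    -- H^{s'}(M,ℝ^d), realized as maps M → ℝ^d
    (Hs' : Type*) [NormedAddCommGroup Hs'] [NormedSpace ℝ Hs']
    (ιm : Hs' →ₗ[ℝ] (M → Euc d)) (hιm : Function.Injective ιm)
    -- the trace operator Tr_q : H^s(ℝ^d,ℝ^d) → H^{s'}(M,ℝ^d), X ↦ X ∘ q
    (Tr : Hs →L[ℝ] Hs') (hTr : ∀ X x, ιm (Tr X) x = ιd X (q x))
    -- a bounded linear extension operator, right inverse of the trace
    (Ex : Hs' →L[ℝ] Hs) (hEx : ∀ u, Tr (Ex u) = u)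
    -- the Riesz isomorphism A of the inner product ⟨·,·⟩_A on H^s, with A X Y = ⟨X,Y⟩_A,
    -- symmetric, positive, and with ⟨X,X⟩_A equivalent to ‖X‖²_{H^s}
    (A : Hs ≃L[ℝ] StrongDual ℝ Hs)
    (hAsymm : ∀ X Y, A X Y = A Y X)
    (CA : ℝ) (hCA : 0 < CA)
    (hAeq : ∀ X, CA⁻¹ * ‖X‖ ^ 2 ≤ A X X ∧ A X X ≤ CA * ‖X‖ ^ 2)
    -- the ‖·‖_A-orthogonal projection P_q with kernel ker Tr_q
    (P : Hs →L[ℝ] Hs)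
    (hPP : ∀ X, P (P X) = P X)
    (hPker : ∀ X, P X = 0 ↔ Tr X = 0)
    (hPorth : ∀ X Y, A (P X) (P Y) = A (P X) Y)
    -- the Riesz isomorphism A_q of the outer metric G^𝒪_q on H^{s'}(M,ℝ^d),
    -- where G^𝒪_q is the polarization of u ↦ inf { ⟨X,X⟩_A : Tr_q X = u }
    (Aq : Hs' →L[ℝ] StrongDual ℝ Hs')
    (hAq : ∀ u v : Hs', Aq u v =
      (sInf {r | ∃ X : Hs, Tr X = u + v ∧ r = A X X} -
        sInf {r | ∃ X : Hs, Tr X = u - v ∧ r = A X X}) / 4)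
    -- B_q = A_q⁻¹
    (Bq : StrongDual ℝ Hs' →L[ℝ] Hs')
    (hBqAq : ∀ u, Bq (Aq u) = u) (hAqBq : ∀ α, Aq (Bq α) = α) :
    (∀ u : Hs', Aq u = (A (P (Ex u))).comp (P.comp Ex)) ∧
    (∀ α : StrongDual ℝ Hs', Bq α = Tr (A.symm (α.comp Tr))) ∧
    (∀ X : Hs, P X = A.symm ((Aq (Tr X)).comp Tr)) :=
  riesz_projection_trace_identities_general Hs Hs' Tr Ex hEx A hAsymm CA hCA hAeq P hPP hPker hPorth
    Aq hAq Bq hBqAq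
end
end

section
/- Let U be a metrizable topological space, E and F Banach spaces, and A : U × E → F a continuous map such that for each x ∈ U the map A_x := A(x,·) is a continuous linear isomorphism from E onto F. If the function x ↦ ‖A_x⁻¹‖_{L(F,E)} is locally bounded on U, then the map A⁻¹ : U × F → E, (x,z) ↦ A_x⁻¹ z, is continuous. -/
/-!
With `e₀ = A_{x₀}⁻¹ z₀`, the left inverse identity gives
`A_x⁻¹ z - e₀ = A_x⁻¹ (z - A_x e₀)`. Continuity of `A` makes `z - A_x e₀ → z₀ - A_{x₀} e₀ = 0`,
and a vector tending to `0` stays so under operators of locally bounded norm.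
-/

open Filter Topology

section

variable {𝕜 X E F : Type*} [NontriviallyNormedField 𝕜] [TopologicalSpace X]
  [SeminormedAddCommGroup E] [NormedSpace 𝕜 E] [SeminormedAddCommGroup F] [NormedSpace 𝕜 F]

theorem ContinuousLinearMap.tendsto_apply_zero_of_isBoundedUnder {α : Type*} {l : Filter α}
    {B : α → F →L[𝕜] E} {v : α → F} (hB : IsBoundedUnder (· ≤ ·) l (‖B ·‖))
    (hv : Tendsto v l (𝓝 0)) : Tendsto (fun a => B a (v a)) l (𝓝 0) :=
  hv.op_zero_isBoundedUnder_le hB (fun z T => T z) fun z T => by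
    rw [mul_comm]; exact T.le_opNorm z

theorem continuousAt_apply_of_leftInverse {A : X → E →L[𝕜] F} {B : X → F →L[𝕜] E}
    {x₀ : X} {z₀ : F} (hA : ContinuousAt (fun x => A x (B x₀ z₀)) x₀) (hBA : ∀ x e, B x (A x e) = e)
    (hAB : A x₀ (B x₀ z₀) = z₀) {C : ℝ} (hB : ∀ᶠ x in 𝓝 x₀, ‖B x‖ ≤ C) :
    ContinuousAt (fun p : X × F => B p.1 p.2) (x₀, z₀) := by
  set e₀ := B x₀ z₀
  have hres : Tendsto (fun p : X × F => p.2 - A p.1 e₀) (𝓝 (x₀, z₀)) (𝓝 0) := by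
    have : Tendsto (fun p : X × F => p.2 - A p.1 e₀) (𝓝 (x₀, z₀)) (𝓝 (z₀ - A x₀ e₀)) :=
      continuousAt_snd.tendsto.sub (hA.tendsto.comp continuousAt_fst)
    rwa [hAB, sub_self] at this
  have hB' : IsBoundedUnder (· ≤ ·) (𝓝 (x₀, z₀)) fun p : X × F => ‖B p.1‖ :=
    isBoundedUnder_of_eventually_le ((continuousAt_fst (p := (x₀, z₀))).eventually hB)
  rw [ContinuousAt, ← tendsto_sub_nhds_zero_iff]
  simpa only [map_sub, hBA] using
    ContinuousLinearMap.tendsto_apply_zero_of_isBoundedUnder hB' hres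

end

theorem continuity_of_parametrized_inverse_general
    (U : Type*) [TopologicalSpace U]
    (E F : Type*) [NormedAddCommGroup E] [NormedSpace ℝ E]
    [NormedAddCommGroup F] [NormedSpace ℝ F]
    (A : U → (E →L[ℝ] F))
    (hA : Continuous fun p : U × E => A p.1 p.2)
    (Ainv : U → (F →L[ℝ] E))
    (hinv_left : ∀ x : U, ∀ e : E, Ainv x (A x e) = e)
    (hinv_right : ∀ x : U, ∀ f : F, A x (Ainv x f) = f)
    (hloc : ∀ x : U, ∃ V ∈ nhds x, ∃ C : ℝ, ∀ y ∈ V, ‖Ainv y‖ ≤ C) :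
    Continuous fun p : U × F => Ainv p.1 p.2 := by
  refine continuous_iff_continuousAt.2 fun ⟨x₀, z₀⟩ => ?_
  obtain ⟨V, hV, C, hC⟩ := hloc x₀
  exact continuousAt_apply_of_leftInverse
    (hA.comp (continuous_id.prodMk continuous_const)).continuousAt hinv_left
    (hinv_right x₀ z₀) (eventually_of_mem hV hC)

/-- Let `U` be a metrizable topological space, `E, F` Banach spaces and
`A : U × E → F` continuous with each `A_x ∈ GL(E,F)`. If `‖A_x⁻¹‖_{L(F,E)}` is locally
bounded, then `A⁻¹ : U × F → E` is continuous. -/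
theorem continuity_of_parametrized_inverse
    (U : Type*) [TopologicalSpace U] [TopologicalSpace.MetrizableSpace U]
    (E F : Type*) [NormedAddCommGroup E] [NormedSpace ℝ E] [CompleteSpace E]
    [NormedAddCommGroup F] [NormedSpace ℝ F] [CompleteSpace F]
    (A : U → (E →L[ℝ] F))
    (hA : Continuous fun p : U × E => A p.1 p.2)
    (Ainv : U → (F →L[ℝ] E))
    (hinv_left : ∀ x : U, ∀ e : E, Ainv x (A x e) = e)
    (hinv_right : ∀ x : U, ∀ f : F, A x (Ainv x f) = f)
    (hloc : ∀ x : U, ∃ V ∈ nhds x, ∃ C : ℝ, ∀ y ∈ V, ‖Ainv y‖ ≤ C) :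
    Continuous fun p : U × F => Ainv p.1 p.2 :=
  continuity_of_parametrized_inverse_general U E F A hA Ainv hinv_left hinv_right hloc
end
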